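/- Let f, g be proper, LSC, convex with f L-smooth, 0 < t < 2/L, and assume argmin(f+g) ≠ ∅. Consider the inexact proximal gradient iteration x_{k+1} = prox_{tg}(x_k − t∇f(x_k)) + ε_k with Σ_k ‖ε_k‖ < ∞. Then x_k converges to a minimizer of f + g. -/

import Mathlib

/-!
Let `T w = prox_{tg} (w - t ∇f w)`. Firm nonexpansiveness of the prox together with the
Baillon–Haddad cocoercivity `‖∇f x - ∇f y‖² ≤ L ⟪∇f x - ∇f y, x - y⟫` gives, for every fixed
point `z` of `T` and some `c > 0` (this is where `t < 2 / L` enters),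
`‖T w - z‖² + c ‖w - T w‖² ≤ ‖w - z‖²`. Fixed points of `T` and minimizers of `f + g` are the
same points: both mean that `-∇f z` is a subgradient of `g` at `z`.

Along the perturbed iteration `x (k + 1) = T (x k) + ε k` the distance `‖x k - z‖` to any fixed
point then converges because the errors are summable, and the residuals `x k - T (x k)` tend to
`0`. In finite dimension the bounded sequence has a cluster point, which is fixed by continuity
of `T`; the distance to it converges and vanishes along a subsequence, hence tends to `0`.
-/

open Set Filter Topology Function RealInnerProductSpace Gradient

theorem exists_tendsto_of_le_add_of_summable {a e : ℕ → ℝ} (ha : ∀ k, 0 ≤ a k)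
    (hstep : ∀ k, a (k + 1) ≤ a k + e k) (he : Summable e) : ∃ l, Tendsto a atTop (𝓝 l) := by
  set S : ℕ → ℝ := fun k => ∑ i ∈ Finset.range k, e i
  have hS : Tendsto S atTop (𝓝 (∑' i, e i)) := he.hasSum.tendsto_sum_nat
  have hanti : Antitone (a - S) := antitone_nat_of_succ_le fun k => by
    simp only [Pi.sub_apply, S, Finset.sum_range_succ]
    linarith [hstep k]
  obtain ⟨M, hM⟩ := hS.bddAbove_range
  have hbdd : BddBelow (range (a - S)) := by
    refine ⟨-M, ?_⟩
    rintro _ ⟨k, rfl⟩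
    linarith [ha k, hM ⟨k, rfl⟩, show (a - S) k = a k - S k from rfl]
  exact ⟨_, by simpa using (tendsto_atTop_ciInf hanti hbdd).add hS⟩

theorem nonneg_of_hasDerivAt_of_forall_Icc_le {φ : ℝ → ℝ} {d : ℝ} (hφ : HasDerivAt φ d 0)
    (h : ∀ s ∈ Icc (0 : ℝ) 1, φ 0 ≤ φ s) : 0 ≤ d := by
  have hmin : IsLocalMinOn φ (Icc 0 1) 0 := IsMinOn.localize h
  have h1 : (1 : ℝ) ∈ posTangentConeAt (Icc 0 1) (0 : ℝ) :=
    mem_posTangentConeAt_of_segment_subset (by simp [segment_eq_Icc])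
  simpa using hmin.hasFDerivWithinAt_nonneg hφ.hasFDerivAt.hasFDerivWithinAt h1

section Iteration

variable {E : Type*} [NormedAddCommGroup E]

/-- For an `α`-averaged map this holds with `c = (1 - α) / α`. -/
def StronglyQuasiNonexpansive (T : E → E) (c : ℝ) : Prop :=
  ∀ z, IsFixedPt T z → ∀ w, ‖T w - z‖ ^ 2 + c * ‖w - T w‖ ^ 2 ≤ ‖w - z‖ ^ 2

variable {T : E → E} {c : ℝ} {x ε : ℕ → E}

theorem StronglyQuasiNonexpansive.norm_sub_le (hT : StronglyQuasiNonexpansive T c) (hc : 0 ≤ c)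
    {z : E} (hz : IsFixedPt T z) (w : E) : ‖T w - z‖ ≤ ‖w - z‖ := by
  refine (pow_le_pow_iff_left₀ (norm_nonneg _) (norm_nonneg _) two_ne_zero).1 ?_
  nlinarith [hT z hz w, sq_nonneg ‖w - T w‖]

theorem norm_succ_sub_le (hx : ∀ k, x (k + 1) = T (x k) + ε k) (z : E) (k : ℕ) :
    ‖x (k + 1) - z‖ ≤ ‖T (x k) - z‖ + ‖ε k‖ := by
  rw [hx, add_sub_right_comm]
  exact norm_add_le _ _

theorem StronglyQuasiNonexpansive.exists_tendsto_norm_sub (hT : StronglyQuasiNonexpansive T c)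
    (hc : 0 ≤ c) (hx : ∀ k, x (k + 1) = T (x k) + ε k) (hε : Summable fun k => ‖ε k‖)
    {z : E} (hz : IsFixedPt T z) : ∃ l, Tendsto (fun k => ‖x k - z‖) atTop (𝓝 l) :=
  exists_tendsto_of_le_add_of_summable (fun _ => norm_nonneg _)
    (fun k => (norm_succ_sub_le hx z k).trans (by gcongr; exact hT.norm_sub_le hc hz _)) hε

theorem StronglyQuasiNonexpansive.tendsto_sub_apply_zero (hT : StronglyQuasiNonexpansive T c)
    (hc : 0 < c) (hx : ∀ k, x (k + 1) = T (x k) + ε k) (hε : Summable fun k => ‖ε k‖)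
    {z : E} (hz : IsFixedPt T z) : Tendsto (fun k => x k - T (x k)) atTop (𝓝 0) := by
  obtain ⟨l, hl⟩ := hT.exists_tendsto_norm_sub hc.le hx hε hz
  have hTl : Tendsto (fun k => ‖T (x k) - z‖) atTop (𝓝 l) := by
    refine tendsto_of_tendsto_of_tendsto_of_le_of_le (g := fun k => ‖x (k + 1) - z‖ - ‖ε k‖)
      ?_ hl (fun k => ?_) (fun k => hT.norm_sub_le hc.le hz _)
    · simpa using ((tendsto_add_atTop_iff_nat 1).2 hl).sub hε.tendsto_atTop_zero
    · linarith [norm_succ_sub_le hx z k]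
  have hsq : Tendsto (fun k => ‖x k - T (x k)‖ ^ 2) atTop (𝓝 0) := by
    have hgap : Tendsto (fun k => (‖x k - z‖ ^ 2 - ‖T (x k) - z‖ ^ 2) / c) atTop (𝓝 0) := by
      simpa using ((hl.pow 2).sub (hTl.pow 2)).div_const c
    refine squeeze_zero (fun _ => sq_nonneg _) (fun k => ?_) hgap
    rw [le_div_iff₀ hc]
    linarith [hT z hz (x k)]
  rw [tendsto_zero_iff_norm_tendsto_zero]
  simpa using hsq.sqrt

theorem StronglyQuasiNonexpansive.exists_tendsto_isFixedPt [ProperSpace E]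
    (hT : StronglyQuasiNonexpansive T c) (hc : 0 < c) (hTc : Continuous T)
    (hfix : ∃ z, IsFixedPt T z) (hx : ∀ k, x (k + 1) = T (x k) + ε k)
    (hε : Summable fun k => ‖ε k‖) : ∃ z, IsFixedPt T z ∧ Tendsto x atTop (𝓝 z) := by
  obtain ⟨z₀, hz₀⟩ := hfix
  obtain ⟨l₀, hl₀⟩ := hT.exists_tendsto_norm_sub hc.le hx hε hz₀
  obtain ⟨M, hM⟩ := hl₀.bddAbove_range
  obtain ⟨z, -, φ, hφ, hxφ⟩ := tendsto_subseq_of_bounded (Metric.isBounded_closedBall (x := z₀))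
    fun k => mem_closedBall_iff_norm.2 (hM ⟨k, rfl⟩)
  have hz : IsFixedPt T z := by
    have h := hxφ.sub ((hTc.tendsto z).comp hxφ)
    refine (sub_eq_zero.1 (tendsto_nhds_unique h ?_)).symm
    exact (hT.tendsto_sub_apply_zero hc hx hε hz₀).comp hφ.tendsto_atTop
  obtain ⟨l, hl⟩ := hT.exists_tendsto_norm_sub hc.le hx hε hz
  have hl0 : l = 0 :=
    tendsto_nhds_unique (hl.comp hφ.tendsto_atTop) (tendsto_iff_norm_sub_tendsto_zero.1 hxφ)
  exact ⟨z, hz, tendsto_iff_norm_sub_tendsto_zero.2 (hl0 ▸ hl)⟩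

end Iteration

section InnerProduct

variable {E : Type*} [NormedAddCommGroup E] [InnerProductSpace ℝ E]

theorem ConvexOn.le_add_smul_sub {g : E → ℝ} (hg : ConvexOn ℝ univ g) (x w : E) {s : ℝ}
    (hs : s ∈ Icc (0 : ℝ) 1) : g (x + s • (w - x)) ≤ g x + s * (g w - g x) := by
  have h := hg.2 (mem_univ x) (mem_univ w) (sub_nonneg.2 hs.2) hs.1 (sub_add_cancel 1 s)
  have hpt : x + s • (w - x) = (1 - s) • x + s • w := by
    rw [smul_sub, sub_smul, one_smul]; abel
  rw [hpt]
  simp only [smul_eq_mul] at h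
  linarith

def HasSubgradient (g : E → ℝ) (s x : E) : Prop :=
  ∀ w, g x + ⟪s, w - x⟫ ≤ g w

theorem HasSubgradient.add {f g : E → ℝ} {a b x : E} (hf : HasSubgradient f a x)
    (hg : HasSubgradient g b x) : HasSubgradient (fun w => f w + g w) (a + b) x := fun w => by
  linarith [hf w, hg w, inner_add_left (𝕜 := ℝ) a b (w - x)]

theorem hasSubgradient_zero_iff {g : E → ℝ} {x : E} :
    HasSubgradient g 0 x ↔ IsMinOn g univ x := by
  simp [HasSubgradient, IsMinOn, IsMinFilter]

theorem HasSubgradient.inner_sub_nonneg {g : E → ℝ} {a b p q : E} (hp : HasSubgradient g a p)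
    (hq : HasSubgradient g b q) : 0 ≤ ⟪a - b, p - q⟫ := by
  have h := add_le_add (hp q) (hq p)
  rw [← neg_sub p q, inner_neg_right] at h
  rw [inner_sub_left]
  linarith

theorem sq_norm_sub_le_inner_of_hasSubgradient {g : E → ℝ} {t : ℝ} (ht : 0 < t) {u v p q : E}
    (hp : HasSubgradient g (t⁻¹ • (u - p)) p) (hq : HasSubgradient g (t⁻¹ • (v - q)) q) :
    ‖p - q‖ ^ 2 ≤ ⟪u - v, p - q⟫ := by
  have h := hp.inner_sub_nonneg hq
  rw [← smul_sub, real_inner_smul_left, sub_sub_sub_comm, inner_sub_left,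
    real_inner_self_eq_norm_sq] at h
  linarith [(mul_nonneg_iff_of_pos_left (inv_pos.2 ht)).1 h]

variable [CompleteSpace E]

theorem HasGradientAt.hasDerivAt_comp_add_smul {f : E → ℝ} {f' x v : E} {s : ℝ}
    (hf : HasGradientAt f f' (x + s • v)) :
    HasDerivAt (fun r : ℝ => f (x + r • v)) ⟪f', v⟫ s := by
  have hline : HasDerivAt (fun r : ℝ => x + r • v) v s := by
    simpa using ((hasDerivAt_id s).smul_const v).const_add x
  exact (hasGradientAt_iff_hasFDerivAt.1 hf).comp_hasDerivAt s hline

theorem ConvexOn.hasSubgradient {f : E → ℝ} {f' x : E} (hfc : ConvexOn ℝ univ f)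
    (hf : HasGradientAt f f' x) : HasSubgradient f f' x := by
  intro w
  have hd : HasDerivAt (fun s : ℝ => f x + s * (f w - f x) - f (x + s • (w - x)))
      (f w - f x - ⟪f', w - x⟫) 0 := by
    have hf0 : HasGradientAt f f' (x + (0 : ℝ) • (w - x)) := by simpa using hf
    have h := (((hasDerivAt_id (0 : ℝ)).mul_const (f w - f x)).const_add (f x)).sub
      hf0.hasDerivAt_comp_add_smul
    rw [one_mul] at h
    exact h
  have := nonneg_of_hasDerivAt_of_forall_Icc_le hd fun s hs => by
    simpa using hfc.le_add_smul_sub x w hs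
  linarith

theorem HasGradientAt.hasSubgradient_neg_of_isMinOn_add {f g : E → ℝ} {f' z : E}
    (hf : HasGradientAt f f' z) (hg : ConvexOn ℝ univ g)
    (hz : IsMinOn (fun w => f w + g w) univ z) : HasSubgradient g (-f') z := by
  intro w
  have hd : HasDerivAt (fun s : ℝ => f (z + s • (w - z)) + s * (g w - g z))
      (⟪f', w - z⟫ + (g w - g z)) 0 := by
    have hf0 : HasGradientAt f f' (z + (0 : ℝ) • (w - z)) := by simpa using hf
    have h := hf0.hasDerivAt_comp_add_smul.add ((hasDerivAt_id (0 : ℝ)).mul_const (g w - g z))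
    rw [one_mul] at h
    exact h
  have := nonneg_of_hasDerivAt_of_forall_Icc_le hd fun s hs => by
    have hmin := hz (mem_univ (z + s • (w - z)))
    simp only [mem_ofPred_eq] at hmin
    simp only [zero_smul, add_zero, zero_mul]
    linarith [hg.le_add_smul_sub z w hs]
  rw [inner_neg_left]
  linarith

section Smooth

variable {f : E → ℝ} {L : ℝ}

theorem apply_le_add_inner_gradient_add_sq (hf : Differentiable ℝ f)
    (hlip : ∀ x y, ‖∇ f x - ∇ f y‖ ≤ L * ‖x - y‖) (x y : E) :
    f y ≤ f x + ⟪∇ f x, y - x⟫ + L / 2 * ‖y - x‖ ^ 2 := by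
  set v := y - x
  let φ : ℝ → ℝ := fun s => f (x + s • v) - s * ⟪∇ f x, v⟫ - L / 2 * s ^ 2 * ‖v‖ ^ 2
  have hφ (s : ℝ) : HasDerivAt φ (⟪∇ f (x + s • v) - ∇ f x, v⟫ - L * s * ‖v‖ ^ 2) s := by
    have h := ((HasGradientAt.hasDerivAt_comp_add_smul (x := x) (v := v) (hf _).hasGradientAt).sub
      ((hasDerivAt_id s).mul_const ⟪∇ f x, v⟫)).sub
      (((hasDerivAt_pow 2 s).const_mul (L / 2)).mul_const (‖v‖ ^ 2))
    refine h.congr_deriv ?_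
    rw [inner_sub_left]
    push_cast
    ring
  have hanti : AntitoneOn φ (Icc 0 1) := by
    refine antitoneOn_of_hasDerivWithinAt_nonpos (convex_Icc 0 1)
      (fun s _ => (hφ s).continuousAt.continuousWithinAt)
      (fun s _ => (hφ s).hasDerivWithinAt) fun s hs => ?_
    rw [interior_Icc] at hs
    have hstep : ‖x + s • v - x‖ = s * ‖v‖ := by
      rw [add_sub_cancel_left, norm_smul, Real.norm_of_nonneg hs.1.le]
    have hcs := real_inner_le_norm (∇ f (x + s • v) - ∇ f x) v
    have hl := hlip (x + s • v) x
    rw [hstep] at hl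
    nlinarith [norm_nonneg v]
  have h01 := hanti (left_mem_Icc.2 zero_le_one) (right_mem_Icc.2 zero_le_one) zero_le_one
  simp only [φ, v, one_smul, add_sub_cancel, zero_smul, add_zero, zero_mul, one_mul,
    one_pow, ne_eq, OfNat.ofNat_ne_zero, not_false_eq_true, zero_pow, mul_zero, sub_zero] at h01
  linarith

theorem ConvexOn.add_inner_gradient_add_sq_le (hfc : ConvexOn ℝ univ f) (hf : Differentiable ℝ f)
    (hL : 0 < L) (hlip : ∀ x y, ‖∇ f x - ∇ f y‖ ≤ L * ‖x - y‖) (x z : E) :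
    f x + ⟪∇ f x, z - x⟫ + (2 * L)⁻¹ * ‖∇ f z - ∇ f x‖ ^ 2 ≤ f z := by
  -- bound `f w` from above by the descent lemma at `z` and from below by convexity at `x`
  set d := ∇ f z - ∇ f x
  set w := z - L⁻¹ • d
  have hup := apply_le_add_inner_gradient_add_sq hf hlip z w
  have hlow := hfc.hasSubgradient (hf x).hasGradientAt w
  have hwz : w - z = -(L⁻¹ • d) := by simp [w]
  have hwx : w - x = (z - x) - L⁻¹ • d := by simp only [w]; abel
  rw [hwz, inner_neg_right, real_inner_smul_right, norm_neg, norm_smul,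
    Real.norm_of_nonneg (inv_nonneg.2 hL.le)] at hup
  rw [hwx, inner_sub_right, real_inner_smul_right] at hlow
  have hd : ⟪∇ f z, d⟫ - ⟪∇ f x, d⟫ = ‖d‖ ^ 2 := by
    rw [← inner_sub_left, real_inner_self_eq_norm_sq]
  have hd' : L⁻¹ * ⟪∇ f z, d⟫ - L⁻¹ * ⟪∇ f x, d⟫ = L⁻¹ * ‖d‖ ^ 2 := by rw [← mul_sub, hd]
  have hcoef : L / 2 * (L⁻¹ * ‖d‖) ^ 2 = (2 * L)⁻¹ * ‖d‖ ^ 2 := by field_simp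
  have hcoef' : L⁻¹ * ‖d‖ ^ 2 = 2 * ((2 * L)⁻¹ * ‖d‖ ^ 2) := by field_simp
  linarith

theorem ConvexOn.sq_norm_gradient_sub_le_mul_inner (hfc : ConvexOn ℝ univ f)
    (hf : Differentiable ℝ f) (hL : 0 < L) (hlip : ∀ x y, ‖∇ f x - ∇ f y‖ ≤ L * ‖x - y‖)
    (x y : E) : ‖∇ f x - ∇ f y‖ ^ 2 ≤ L * ⟪∇ f x - ∇ f y, x - y⟫ := by
  have hxy := hfc.add_inner_gradient_add_sq_le hf hL hlip x y
  have hyx := hfc.add_inner_gradient_add_sq_le hf hL hlip y x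
  rw [norm_sub_rev] at hxy
  have hsum : ⟪∇ f x - ∇ f y, x - y⟫ = -(⟪∇ f x, y - x⟫ + ⟪∇ f y, x - y⟫) := by
    rw [← neg_sub x y, inner_neg_right, inner_sub_left]
    ring
  calc ‖∇ f x - ∇ f y‖ ^ 2 = L * (2 * ((2 * L)⁻¹ * ‖∇ f x - ∇ f y‖ ^ 2)) := by field_simp
    _ ≤ L * ⟪∇ f x - ∇ f y, x - y⟫ := by gcongr; linarith

end Smooth

section Prox

variable {g : E → ℝ} {t : ℝ} {P : E → E}

def IsProxMap (g : E → ℝ) (t : ℝ) (P : E → E) : Prop :=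
  ∀ y, IsMinOn (fun z => g z + (1 / (2 * t)) * ‖z - y‖ ^ 2) univ (P y)

theorem hasGradientAt_const_mul_sq_norm_sub (a : ℝ) (x y : E) :
    HasGradientAt (fun z => a * ‖z - y‖ ^ 2) ((2 * a) • (x - y)) x := by
  rw [hasGradientAt_iff_hasFDerivAt]
  refine ((((hasFDerivAt_id x).sub_const y).norm_sq).const_mul a).congr_fderiv ?_
  ext v
  simp
  ring

theorem IsProxMap.hasSubgradient (hP : IsProxMap g t P) (hg : ConvexOn ℝ univ g) (y : E) :
    HasSubgradient g (t⁻¹ • (y - P y)) (P y) := by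
  have h := (hasGradientAt_const_mul_sq_norm_sub (1 / (2 * t)) (P y) y)
    |>.hasSubgradient_neg_of_isMinOn_add hg (by simpa only [add_comm] using hP y)
  convert h using 1
  rw [← smul_neg, neg_sub]
  congr 1
  ring

theorem IsProxMap.sq_norm_sub_le_inner (hP : IsProxMap g t P) (hg : ConvexOn ℝ univ g)
    (ht : 0 < t) (u v : E) : ‖P u - P v‖ ^ 2 ≤ ⟪u - v, P u - P v⟫ :=
  sq_norm_sub_le_inner_of_hasSubgradient ht (hP.hasSubgradient hg u) (hP.hasSubgradient hg v)

theorem IsProxMap.eq_iff_hasSubgradient (hP : IsProxMap g t P) (hg : ConvexOn ℝ univ g)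
    (ht : 0 < t) {y p : E} : P y = p ↔ HasSubgradient g (t⁻¹ • (y - p)) p := by
  refine ⟨fun h => h ▸ hP.hasSubgradient hg y, fun h => ?_⟩
  have := sq_norm_sub_le_inner_of_hasSubgradient ht (hP.hasSubgradient hg y) h
  rw [sub_self, inner_zero_left] at this
  exact sub_eq_zero.1 (norm_eq_zero.1 (pow_eq_zero_iff two_ne_zero |>.1
    (le_antisymm this (sq_nonneg _))))

theorem IsProxMap.lipschitzWith_one (hP : IsProxMap g t P) (hg : ConvexOn ℝ univ g)
    (ht : 0 < t) : LipschitzWith 1 P := by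
  refine LipschitzWith.mk_one fun u v => ?_
  rw [dist_eq_norm, dist_eq_norm]
  have hfirm := hP.sq_norm_sub_le_inner hg ht u v
  have hcs := real_inner_le_norm (u - v) (P u - P v)
  nlinarith [norm_nonneg (P u - P v), norm_nonneg (u - v)]

end Prox

section ProxGrad

variable {f g : E → ℝ} {L t : ℝ} {P : E → E}

noncomputable def proxGradMap (P : E → E) (f : E → ℝ) (t : ℝ) (w : E) : E :=
  P (w - t • ∇ f w)

theorem IsProxMap.isFixedPt_proxGradMap_iff (hP : IsProxMap g t P) (hg : ConvexOn ℝ univ g)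
    (ht : 0 < t) {z : E} : IsFixedPt (proxGradMap P f t) z ↔ HasSubgradient g (-∇ f z) z := by
  rw [IsFixedPt, proxGradMap, hP.eq_iff_hasSubgradient hg ht, sub_sub_cancel_left, smul_neg,
    inv_smul_smul₀ ht.ne']

theorem isMinOn_add_iff_hasSubgradient (hfc : ConvexOn ℝ univ f) {z : E}
    (hf : DifferentiableAt ℝ f z) (hg : ConvexOn ℝ univ g) :
    IsMinOn (fun w => f w + g w) univ z ↔ HasSubgradient g (-∇ f z) z := by
  refine ⟨hf.hasGradientAt.hasSubgradient_neg_of_isMinOn_add hg, fun h => ?_⟩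
  rw [← hasSubgradient_zero_iff, ← add_neg_cancel (∇ f z)]
  exact (hfc.hasSubgradient hf.hasGradientAt).add h

theorem IsProxMap.continuous_proxGradMap (hP : IsProxMap g t P) (hg : ConvexOn ℝ univ g)
    (ht : 0 < t) (hlip : ∀ x y, ‖∇ f x - ∇ f y‖ ≤ L * ‖x - y‖) :
    Continuous (proxGradMap P f t) := by
  have hgrad : Continuous (∇ f) :=
    (LipschitzWith.of_dist_le' (K := L) (by simpa only [dist_eq_norm] using hlip)).continuous
  exact (hP.lipschitzWith_one hg ht).continuous.comp (continuous_id.sub (hgrad.const_smul t))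

theorem IsProxMap.stronglyQuasiNonexpansive_proxGradMap (hP : IsProxMap g t P)
    (hg : ConvexOn ℝ univ g) (hfc : ConvexOn ℝ univ f) (hf : Differentiable ℝ f) (hL : 0 < L)
    (hlip : ∀ x y, ‖∇ f x - ∇ f y‖ ≤ L * ‖x - y‖) (ht : 0 < t) {c : ℝ} (hc : 0 ≤ c)
    (hc₁ : c ≤ 1 / 2) (hc₂ : c ≤ (2 / L - t) / (2 * t)) :
    StronglyQuasiNonexpansive (proxGradMap P f t) c := by
  intro z hz w
  set d := ∇ f w - ∇ f z
  set A := (w - t • ∇ f w) - (z - t • ∇ f z)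
  set B := proxGradMap P f t w - z
  have hfirm : ‖B‖ ^ 2 ≤ ⟪A, B⟫ := by
    have h := hP.sq_norm_sub_le_inner hg ht (w - t • ∇ f w) (z - t • ∇ f z)
    rwa [show P (z - t • ∇ f z) = z from hz] at h
  have hA : A = (w - z) - t • d := by simp only [A, d, smul_sub]; abel
  have hcoco := hfc.sq_norm_gradient_sub_le_mul_inner hf hL hlip w z
  have hAle : ‖A‖ ^ 2 + t * (2 / L - t) * ‖d‖ ^ 2 ≤ ‖w - z‖ ^ 2 := by
    have hexp : ‖A‖ ^ 2 = ‖w - z‖ ^ 2 - 2 * t * ⟪d, w - z⟫ + t ^ 2 * ‖d‖ ^ 2 := by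
      rw [hA, norm_sub_sq_real, real_inner_smul_right, norm_smul, Real.norm_of_nonneg ht.le,
        real_inner_comm]
      ring
    have hdiv : 2 * t / L * ‖d‖ ^ 2 ≤ 2 * t * ⟪d, w - z⟫ := by
      rw [div_mul_eq_mul_div, div_le_iff₀ hL]
      nlinarith
    have : t * (2 / L - t) = 2 * t / L - t ^ 2 := by ring
    rw [this]
    linarith
  have hres : w - proxGradMap P f t w = (A - B) + t • d := by simp only [A, B, d, smul_sub]; abel
  have hresle : ‖w - proxGradMap P f t w‖ ^ 2 ≤ 2 * ‖A - B‖ ^ 2 + 2 * t ^ 2 * ‖d‖ ^ 2 := by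
    rw [hres]
    have htd : ‖t • d‖ = t * ‖d‖ := by rw [norm_smul, Real.norm_of_nonneg ht.le]
    nlinarith [norm_add_le (A - B) (t • d), sq_nonneg (‖A - B‖ - ‖t • d‖), norm_nonneg (A - B),
      norm_nonneg (A - B + t • d)]
  have hsplit : ‖B‖ ^ 2 + ‖A - B‖ ^ 2 ≤ ‖A‖ ^ 2 := by
    rw [norm_sub_sq_real A B]
    linarith
  have hct : 2 * c * t ^ 2 ≤ t * (2 / L - t) := by
    rw [le_div_iff₀ (by positivity)] at hc₂
    nlinarith
  nlinarith [sq_nonneg ‖A - B‖, sq_nonneg ‖d‖]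

end ProxGrad

end InnerProduct

theorem inexact_prox_grad_converges_general
    (n : ℕ) (L t : ℝ) (hL : 0 < L)
    (f g : EuclideanSpace ℝ (Fin n) → ℝ)
    (hf_conv : ConvexOn ℝ Set.univ f)
    (hf_diff : Differentiable ℝ f)
    (hf_smooth : ∀ x y, ‖gradient f x - gradient f y‖ ≤ L * ‖x - y‖)
    (hg_conv : ConvexOn ℝ Set.univ g)
    (ht : 0 < t) (ht2 : t < 2 / L)
    (hargmin : ∃ z, IsMinOn (fun w => f w + g w) Set.univ z)
    (proxg : EuclideanSpace ℝ (Fin n) → EuclideanSpace ℝ (Fin n))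
    (hproxg : ∀ y, IsMinOn (fun z => g z + (1 / (2 * t)) * ‖z - y‖ ^ 2) Set.univ (proxg y))
    (x ε : ℕ → EuclideanSpace ℝ (Fin n))
    (hiter : ∀ k, x (k + 1) = proxg (x k - t • gradient f (x k)) + ε k)
    (hsum : Summable fun k => ‖ε k‖) :
    ∃ xstar, IsMinOn (fun w => f w + g w) Set.univ xstar ∧
      Filter.Tendsto x Filter.atTop (nhds xstar) := by
  have hP : IsProxMap g t proxg := hproxg
  have hfix (z) : IsFixedPt (proxGradMap proxg f t) z ↔ IsMinOn (fun w => f w + g w) univ z :=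
    (hP.isFixedPt_proxGradMap_iff hg_conv ht).trans
      (isMinOn_add_iff_hasSubgradient hf_conv (hf_diff z) hg_conv).symm
  have hc : 0 < min (1 / 2) ((2 / L - t) / (2 * t)) :=
    lt_min one_half_pos (div_pos (sub_pos.2 ht2) (by positivity))
  have hT := hP.stronglyQuasiNonexpansive_proxGradMap hg_conv hf_conv hf_diff hL hf_smooth ht
    hc.le (min_le_left _ _) (min_le_right _ _)
  obtain ⟨z₀, hz₀⟩ := hargmin
  obtain ⟨xstar, hxstar, hlim⟩ := hT.exists_tendsto_isFixedPt hc
    (hP.continuous_proxGradMap hg_conv ht hf_smooth) ⟨z₀, (hfix z₀).2 hz₀⟩ hiter hsum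
  exact ⟨xstar, (hfix xstar).1 hxstar, hlim⟩

/-- For `f, g` proper, LSC, convex with `f` `L`-smooth, `0 < t < 2/L`,
and `argmin(f+g) ≠ ∅`, the inexact proximal gradient iteration
`x_{k+1} = prox_{tg}(x_k − t∇f(x_k)) + ε_k` with `Σ‖ε_k‖ < ∞` converges to a minimizer
of `f + g`. -/
theorem inexact_prox_grad_converges
    (n : ℕ) (L t : ℝ) (hL : 0 < L)
    (f g : EuclideanSpace ℝ (Fin n) → ℝ)
    (hf_conv : ConvexOn ℝ Set.univ f)
    (hf_diff : Differentiable ℝ f)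
    (hf_smooth : ∀ x y, ‖gradient f x - gradient f y‖ ≤ L * ‖x - y‖)
    (hg_conv : ConvexOn ℝ Set.univ g)
    (hg_lsc : LowerSemicontinuous g)
    (ht : 0 < t) (ht2 : t < 2 / L)
    (hargmin : ∃ z, IsMinOn (fun w => f w + g w) Set.univ z)
    (proxg : EuclideanSpace ℝ (Fin n) → EuclideanSpace ℝ (Fin n))
    (hproxg : ∀ y, IsMinOn (fun z => g z + (1 / (2 * t)) * ‖z - y‖ ^ 2) Set.univ (proxg y))
    (x ε : ℕ → EuclideanSpace ℝ (Fin n))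
    (hiter : ∀ k, x (k + 1) = proxg (x k - t • gradient f (x k)) + ε k)
    (hsum : Summable fun k => ‖ε k‖) :
    ∃ xstar, IsMinOn (fun w => f w + g w) Set.univ xstar ∧
      Filter.Tendsto x Filter.atTop (nhds xstar) :=
  inexact_prox_grad_converges_general n L t hL f g hf_conv hf_diff hf_smooth hg_conv ht ht2 hargmin
    proxg hproxg x ε hiter hsum
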